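/- Let G = ⟨s₁,...,s_r⟩ be the free group of rank r, K a finite set, κ a probability measure on K, and α the Bernoulli partition of (K^G, κ^G). Then for every k ≥ 0, F(α^k) = H(κ), where F(γ) = (1-2r)H(γ) + Σ_i H(γ ∨ s_iγ) and α^k = ⋁_{g∈B(e,k)} gα. Consequently f(G, K^G, κ^G) = H(κ). -/

import Mathlib

/-!
Distinct coordinates of a Bernoulli shift are independent, so the partition of `K^G` by the
coordinates in a finite set `F` has entropy `#F * H(κ)`. Hence, with `B = B(e,k)`,
`F(α^k) = H(κ) * ((1 - 2r) |B| + ∑ᵢ |B ∪ sᵢB|)`, and `|B ∪ sᵢB| = 2|B| - |B ∩ sᵢB|`.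
The set `B ∩ sᵢB` indexes the `sᵢ`-labelled edges of the Cayley tree lying inside `B`; since
`B` is a finite subtree, it has `|B| - 1` edges in all, and the bracket equals `1`.
-/

open MeasureTheory
open scoped ENNReal

namespace Bowen

/-- Shannon entropy of the (countable) partition of `X` into fibers of `α`. -/
noncomputable def entropy {X : Type*} [MeasurableSpace X] {ι : Type*} (μ : Measure X)
    (α : X → ι) : ℝ :=
  ∑' i, Real.negMulLog (μ (α ⁻¹' {i})).toReal

/-- Word-metric ball of radius `n` for the generating set `S`. -/
def ballF {G : Type*} [Group G] [DecidableEq G] (S : Finset G) : ℕ → Finset G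
  | 0 => {1}
  | n + 1 => ballF S n ∪ (S ×ˢ ballF S n).image (fun p => p.1 * p.2)

/-- The symmetric generating set `S = {s₁^{±1},…,s_r^{±1}}` of the rank `r` free group. -/
noncomputable def genS (r : ℕ) : Finset (FreeGroup (Fin r)) :=
  letI := Classical.decEq (FreeGroup (Fin r))
  (Finset.univ.image fun i : Fin r => FreeGroup.of i) ∪
    (Finset.univ.image fun i : Fin r => (FreeGroup.of i)⁻¹)

/-- The word-metric ball `B(e,n)` in the rank `r` free group. -/
noncomputable def ballFree (r : ℕ) (n : ℕ) : Finset (FreeGroup (Fin r)) :=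
  letI := Classical.decEq (FreeGroup (Fin r))
  ballF (genS r) n

/-- `B(e,k) ∪ s_i·B(e,k)`, indexing the atoms of `α^k ∨ s_iα^k`. -/
noncomputable def ballUnion (r : ℕ) (i : Fin r) (k : ℕ) : Finset (FreeGroup (Fin r)) :=
  letI := Classical.decEq (FreeGroup (Fin r))
  ballFree r k ∪ (ballFree r k).image (fun g => FreeGroup.of i * g)

/-- `F(α^k) = (1-2r)H(α^k) + ∑ᵢ H(α^k ∨ s_iα^k)` for the Bernoulli partition
`α = {A_m}`, `A_m = {x | x(e) = m}`, of the Bernoulli shift over the rank `r` free group: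
the atoms of `α^k = ⋁_{g ∈ B(e,k)} gα` are the fibers of `x ↦ (x(g))_{g ∈ B(e,k)}`, and
those of `α^k ∨ s_iα^k` are the fibers of `x ↦ (x(g))_{g ∈ B(e,k) ∪ s_iB(e,k)}`. -/
noncomputable def FBern (r : ℕ) {K : Type*} [MeasurableSpace K]
    (μ : Measure (FreeGroup (Fin r) → K)) (k : ℕ) : ℝ :=
  (1 - 2 * (r : ℝ)) *
      entropy μ (fun x (g : {g // g ∈ ballFree r k}) => x g.1) +
    ∑ i : Fin r, entropy μ (fun x (g : {g // g ∈ ballUnion r i k}) => x g.1)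

end Bowen

open Bowen


open Real Finset

theorem Real.negMulLog_prod {ι : Type*} [DecidableEq ι] (s : Finset ι) (f : ι → ℝ) :
    negMulLog (∏ i ∈ s, f i) = ∑ i ∈ s, negMulLog (f i) * ∏ j ∈ s.erase i, f j := by
  induction s using Finset.induction_on with
  | empty => simp
  | insert a s ha ih =>
    rw [prod_insert ha, negMulLog_mul, ih, sum_insert ha, erase_insert ha, mul_sum]
    congr 1
    · ring
    · refine sum_congr rfl fun i hi => ?_
      rw [erase_insert_of_ne (ne_of_mem_of_not_mem hi ha).symm,
        prod_insert fun h => ha (mem_of_mem_erase h)]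
      ring

theorem Real.sum_negMulLog_prod {ι K : Type*} [Fintype ι] [DecidableEq ι] [Fintype K]
    (a : K → ℝ) (ha : ∑ m, a m = 1) :
    ∑ y : ι → K, negMulLog (∏ g, a (y g)) = Fintype.card ι * ∑ m, negMulLog (a m) := by
  have marginal (g : ι) :
      ∑ y : ι → K, negMulLog (a (y g)) * ∏ j ∈ univ.erase g, a (y j) = ∑ m, negMulLog (a m) :=
    calc _ = ∑ y : ι → K, ∏ j, (if j = g then negMulLog (a (y j)) else a (y j)) := by
            refine sum_congr rfl fun y _ => ?_
            rw [← mul_prod_erase univ _ (mem_univ g), if_pos rfl]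
            exact congrArg _ (prod_congr rfl fun j hj => (if_neg (ne_of_mem_erase hj)).symm)
      _ = ∏ j, ∑ m, (if j = g then negMulLog (a m) else a m) :=
            (Fintype.prod_sum fun j m => if j = g then negMulLog (a m) else a m).symm
      _ = ∑ m, negMulLog (a m) := by
            rw [← mul_prod_erase univ _ (mem_univ g),
              prod_eq_one fun j hj => by simp [ne_of_mem_erase hj, ha]]
            simp
  simp only [negMulLog_prod]
  rw [sum_comm]
  simp only [marginal, sum_const, card_univ, nsmul_eq_mul]

namespace FreeGroup

section Words

variable {α : Type*}

theorem of_inv_eq_mk (a : α) : (of a)⁻¹ = mk [(a, false)] := rfl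

variable [DecidableEq α]

theorem norm_mk_singleton (x : α × Bool) : (mk [x]).norm = 1 := rfl

theorem toWord_mk_singleton_mul {x : α × Bool} {g : FreeGroup α}
    (h : IsReduced (x :: g.toWord)) : (mk [x] * g).toWord = x :: g.toWord := by
  have e : mk [x] * g = mk (x :: g.toWord) := by
    conv_lhs => rw [← mk_toWord (x := g)]
    exact mul_mk
  rw [e, toWord_mk, h.reduce_eq]

theorem toWord_inv_mk_singleton_mul {x : α × Bool} {L : List (α × Bool)} {g : FreeGroup α}
    (h : g.toWord = x :: L) : ((mk [x])⁻¹ * g).toWord = L := by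
  have hL : IsReduced L := isReduced_toWord.infix (h ▸ List.suffix_cons x L).isInfix
  have e : g = mk [x] * mk L := by rw [mul_mk, List.singleton_append, ← h, mk_toWord]
  rw [e, inv_mul_cancel_left, toWord_mk, hL.reduce_eq]

theorem toWord_of_inv_mul {a : α} {g : FreeGroup α} (h : g.toWord.head? ≠ some (a, true)) :
    ((of a)⁻¹ * g).toWord = (a, false) :: g.toWord := by
  refine of_inv_eq_mk a ▸ toWord_mk_singleton_mul ?_
  rcases hg : g.toWord with _ | ⟨⟨b, c⟩, L⟩
  · exact .singleton
  · rw [hg] at h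
    refine isReduced_cons_cons.2 ⟨fun hb => ?_, hg ▸ isReduced_toWord⟩
    cases c <;> simp_all

theorem head?_ne_of_toWord_eq_cons {a : α} {L : List (α × Bool)} {g : FreeGroup α}
    (h : g.toWord = (a, false) :: L) : L.head? ≠ some (a, true) := by
  intro hL
  obtain ⟨t, rfl⟩ : ∃ t, L = (a, true) :: t := by
    cases L with
    | nil => simp at hL
    | cons y t => exact ⟨t, by simpa using hL⟩
  have hred : IsReduced ((a, false) :: (a, true) :: t) := h ▸ isReduced_toWord
  simp at hred

end Words

section CayleyTree

variable {α : Type*} [DecidableEq α]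

/-- Of the two ends `x` and `(of a)⁻¹ * x` of an `a`-labelled edge of the Cayley tree, the one
farther from `1`. -/
def outerEnd (a : α) (x : FreeGroup α) : FreeGroup α :=
  if x.toWord.head? = some (a, true) then x else (of a)⁻¹ * x

theorem toWord_head?_outerEnd (a : α) (x : FreeGroup α) :
    (outerEnd a x).toWord.head? = some (a, decide (x.toWord.head? = some (a, true))) := by
  unfold outerEnd
  split_ifs with h
  · simp [h]
  · simp [toWord_of_inv_mul h, h]

/-- `S ∩ S.image (of a * ·)` indexes the `a`-labelled edges of the Cayley tree inside `S`; when `S`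
is closed under deleting first letters, `outerEnd` matches all these edges with `S.erase 1`. -/
theorem sum_card_inter_image_of_mul [Fintype α] (S : Finset (FreeGroup α))
    (hS : ∀ g ∈ S, ∀ x L, g.toWord = x :: L → (mk [x])⁻¹ * g ∈ S) :
    ∑ a, #(S ∩ S.image (of a * ·)) = #(S.erase 1) := by
  rw [← card_sigma]
  refine card_nbij (fun p => outerEnd p.1 p.2) ?_ ?_ ?_
  · rintro ⟨a, x⟩ hx
    simp only [mem_coe, mem_sigma, mem_inter, mem_image] at hx
    obtain ⟨-, hxS, y, hyS, rfl⟩ := hx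
    refine mem_erase.2 ⟨fun h1 => ?_, ?_⟩
    · simpa [h1] using toWord_head?_outerEnd a (of a * y)
    · dsimp only [outerEnd]
      split_ifs
      · exact hxS
      · rwa [inv_mul_cancel_left]
  · rintro ⟨a, x⟩ - ⟨b, y⟩ - hxy
    have hhead := congrArg (fun g => g.toWord.head?) hxy
    simp only [toWord_head?_outerEnd, Option.some.injEq, Prod.mk.injEq, decide_eq_decide] at hhead
    obtain ⟨rfl, hxy_branch⟩ := hhead
    simp only [outerEnd, hxy_branch] at hxy
    split_ifs at hxy
    · rw [hxy]
    · rw [mul_left_cancel hxy]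
  · intro h hh
    obtain ⟨hne, hhS⟩ := mem_erase.1 hh
    rcases hw : h.toWord with _ | ⟨⟨a, _ | _⟩, L⟩
    · exact absurd (toWord_eq_nil_iff.1 hw) hne
    · have hparent : (of a * h).toWord = L := toWord_inv_mk_singleton_mul hw
      refine ⟨⟨a, of a * h⟩, ?_, ?_⟩
      · rw [mem_coe, mem_sigma, mem_inter, mem_image]
        exact ⟨mem_univ a, hS h hhS _ _ hw, h, hhS, rfl⟩
      · simp [outerEnd, hparent, head?_ne_of_toWord_eq_cons hw]
    · refine ⟨⟨a, h⟩, ?_, ?_⟩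
      · rw [mem_coe, mem_sigma, mem_inter, mem_image]
        exact ⟨mem_univ a, hhS, (of a)⁻¹ * h, hS h hhS _ _ hw, mul_inv_cancel_left _ _⟩
      · simp [outerEnd, hw]

end CayleyTree

end FreeGroup

namespace Bowen

open FreeGroup

theorem entropy_restrict_eq_card_mul {G K : Type*} [Fintype K] [MeasurableSpace K]
    [MeasurableSingletonClass K] (κ : Measure K) [IsProbabilityMeasure κ]
    (μ : Measure (G → K)) (F : Finset G)
    (hcyl : ∀ y : G → K, μ {x | ∀ g ∈ F, x g = y g} = ∏ g ∈ F, κ {y g}) :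
    entropy μ (fun (x : G → K) (g : {g // g ∈ F}) => x g.1) =
      #F * ∑ m, negMulLog (κ {m}).toReal := by
  classical
  have : Nonempty K := nonempty_of_isProbabilityMeasure κ
  have hfiber (y : F → K) :
      μ ((fun (x : G → K) (g : {g // g ∈ F}) => x g.1) ⁻¹' {y}) = ∏ g : F, κ {y g} := by
    let ext : G → K := fun g => if h : g ∈ F then y ⟨g, h⟩ else Classical.arbitrary K
    have hpre : (fun (x : G → K) (g : {g // g ∈ F}) => x g.1) ⁻¹' {y} =
        {x | ∀ g ∈ F, x g = ext g} := by
      ext x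
      simp only [Set.mem_preimage, Set.mem_singleton_iff, funext_iff, Subtype.forall,
        Set.mem_ofPred_eq]
      exact forall₂_congr fun g hg => by simp only [ext, dif_pos hg]
    rw [hpre, hcyl, ← prod_coe_sort]
    simp [ext]
  have hκ : ∑ m, (κ {m}).toReal = 1 := by
    simp only [← measureReal_def, sum_measureReal_singleton, coe_univ, probReal_univ]
  rw [entropy, tsum_fintype, ← Fintype.card_coe F, ← sum_negMulLog_prod _ hκ]
  simp [hfiber, ENNReal.toReal_prod]

variable {r : ℕ}

theorem mem_genS_iff {s : FreeGroup (Fin r)} : s ∈ genS r ↔ ∃ x, mk [x] = s := by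
  simp only [genS, mem_union, mem_image, mem_univ, true_and, of_inv_eq_mk]
  simp only [of, Prod.exists, Bool.exists_bool, exists_or, or_comm]

theorem mem_ballFree_succ_iff {g : FreeGroup (Fin r)} {n : ℕ} :
    g ∈ ballFree r (n + 1) ↔ g ∈ ballFree r n ∨ ∃ s ∈ genS r, ∃ h ∈ ballFree r n, s * h = g := by
  simp only [ballFree, ballF, mem_union, mem_image, mem_product, Prod.exists, and_assoc,
    exists_and_left]

theorem mem_ballFree_iff {g : FreeGroup (Fin r)} {n : ℕ} : g ∈ ballFree r n ↔ g.norm ≤ n := by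
  induction n generalizing g with
  | zero => simp [ballFree, ballF]
  | succ n ih =>
    rw [mem_ballFree_succ_iff, ih]
    constructor
    · rintro (hg | ⟨s, hs, h, hh, rfl⟩)
      · omega
      · obtain ⟨x, rfl⟩ := mem_genS_iff.1 hs
        have := norm_mul_le (mk [x]) h
        rw [norm_mk_singleton] at this
        rw [ih] at hh
        omega
    · intro hg
      rcases hw : g.toWord with _ | ⟨x, L⟩
      · simp [FreeGroup.norm, hw]
      · refine .inr ⟨mk [x], mem_genS_iff.2 ⟨x, rfl⟩, (mk [x])⁻¹ * g, ?_,
          mul_inv_cancel_left _ _⟩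
        rw [ih, FreeGroup.norm, toWord_inv_mk_singleton_mul hw]
        simp only [FreeGroup.norm, hw, List.length_cons] at hg
        omega

theorem inv_mk_singleton_mul_mem_ballFree {g : FreeGroup (Fin r)} {k : ℕ}
    (hg : g ∈ ballFree r k) {x : Fin r × Bool} {L : List (Fin r × Bool)} (hw : g.toWord = x :: L) :
    (mk [x])⁻¹ * g ∈ ballFree r k := by
  rw [mem_ballFree_iff, FreeGroup.norm, toWord_inv_mk_singleton_mul hw]
  rw [mem_ballFree_iff, FreeGroup.norm, hw, List.length_cons] at hg
  omega

theorem ballUnion_eq (i : Fin r) (k : ℕ) :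
    ballUnion r i k = ballFree r k ∪ (ballFree r k).image (of i * ·) := by
  ext g
  simp [ballUnion]

theorem sum_card_ballUnion_add_card_ballFree (k : ℕ) :
    ∑ i, #(ballUnion r i k) + #(ballFree r k) = 2 * r * #(ballFree r k) + 1 := by
  have hunion (i : Fin r) :
      #(ballUnion r i k) + #(ballFree r k ∩ (ballFree r k).image (of i * ·)) =
        2 * #(ballFree r k) := by
    rw [ballUnion_eq, card_union_add_card_inter, card_image_of_injective _ (mul_right_injective _),
      two_mul]
  have htree := sum_card_inter_image_of_mul (ballFree r k)
    fun _ hg _ _ hw => inv_mk_singleton_mul_mem_ballFree hg hw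
  have hone : #((ballFree r k).erase 1) + 1 = #(ballFree r k) :=
    card_erase_add_one (mem_ballFree_iff.2 (by simp))
  have hsum := sum_congr rfl fun i (_ : i ∈ univ) => hunion i
  rw [sum_add_distrib, htree, sum_const, card_univ, Fintype.card_fin, smul_eq_mul] at hsum
  linarith

end Bowen

/-- Theorem 5.2: for the Bernoulli shift `(G, K^G, κ^G)` over the rank `r`
free group with Bernoulli partition `α`, `F(α^k) = H(κ)` for every `k ≥ 0`, and
consequently `f(G, K^G, κ^G) = inf_k F(α^k) = H(κ)`.  (The product measure `κ^G` is
characterized by its values on cylinder sets.) -/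
theorem f_invariant_bernoulli {r : ℕ} {K : Type*} [Fintype K] [MeasurableSpace K]
    [MeasurableSingletonClass K] (κ : Measure K) [IsProbabilityMeasure κ]
    (μ : Measure (FreeGroup (Fin r) → K))
    (hcyl : ∀ (F : Finset (FreeGroup (Fin r))) (y : FreeGroup (Fin r) → K),
      μ {x | ∀ g ∈ F, x g = y g} = ∏ g ∈ F, κ {y g}) :
    (∀ k : ℕ, FBern r μ k = ∑' m : K, Real.negMulLog (κ {m}).toReal) ∧
    (⨅ k : ℕ, (FBern r μ k : EReal))
      = ((∑' m : K, Real.negMulLog (κ {m}).toReal : ℝ) : EReal) := by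
  have hF (k : ℕ) : FBern r μ k = ∑' m : K, Real.negMulLog (κ {m}).toReal := by
    have hcount : ∑ i, (#(ballUnion r i k) : ℝ) + #(ballFree r k)
        = 2 * r * #(ballFree r k) + 1 := by
      exact_mod_cast sum_card_ballUnion_add_card_ballFree k
    simp only [FBern, entropy_restrict_eq_card_mul κ μ _ (hcyl _), ← sum_mul, tsum_fintype]
    linear_combination (∑ m, negMulLog (κ {m}).toReal) * hcount
  exact ⟨hF, by simp only [hF, iInf_const]⟩
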